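/- Let ε > 0, τ > 0 and δ ∈ (0,1). Then e^{ετ}/(1 + e^{ετ}) ≥ 1 − δ if and only if τ ≥ (1/ε)·ln((1 − δ)/δ). Consequently, for the two-outcome exponential mechanism EM_count that outputs o ∈ {0,1} with probability proportional to exp(ε·τ·u'(qD, o)): (i) if qD = qDs, then Pr[output = 1] = e^{ετ}/(1 + e^{ετ}) ≥ 1 − δ whenever τ ≥ (1/ε)·ln((1 − δ)/δ); (ii) if qD ∉ (qDs − 2τ, qDs + 2τ), then Pr[output = 0] = e^{ετ}/(1 + e^{ετ}) ≥ 1 − δ whenever τ ≥ (1/ε)·ln((1 − δ)/δ). Hence the effectiveness threshold of EM_count at δ is at most (1/ε)·ln((1 − δ)/δ). -/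

import Mathlib

open scoped Classical

/-- The improved score `u'(x, 1)` of `EM_count` (value of the score function on
outcome `1`), with `l − τ = qDs − 2τ` and `r + τ = qDs + 2τ`. -/
noncomputable def emScore (τ qDs x : ℝ) : ℝ :=
  if x ≤ qDs - 2 * τ ∨ qDs + 2 * τ ≤ x then 0
  else if x ≤ qDs then (x - (qDs - 2 * τ)) / (2 * τ)
  else 1 - (x - qDs) / (2 * τ)

/-- Probability that the two-outcome exponential mechanism `EM_count`, which outputs
`o ∈ {0,1}` with probability proportional to `exp (ε·τ·u'(qD, o))`
(where `u'(x,1) = emScore τ qDs x` and `u'(x,0) = 1 − emScore τ qDs x`),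
returns outcome `o`. -/
noncomputable def emProb (ε τ qDs qD : ℝ) (o : Bool) : ℝ :=
  Real.exp (ε * τ * (if o then emScore τ qDs qD else 1 - emScore τ qDs qD)) /
    (Real.exp (ε * τ * emScore τ qDs qD) + Real.exp (ε * τ * (1 - emScore τ qDs qD)))

/-! At `qD = qDs` the score of outcome `1` is `1`, and outside `(qDs - 2τ, qDs + 2τ)` it is `0`,
so in both cases the favoured outcome has probability `exp (ετ) / (1 + exp (ετ)) = sigmoid (ετ)`.
Since `1 - δ` is the sigmoid of the logit `log ((1 - δ) / δ)`, the threshold condition is just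
monotonicity of the sigmoid. -/

open Real

lemma sigmoid_log_one_sub_div {δ : ℝ} (hδ0 : 0 < δ) (hδ1 : δ < 1) :
    sigmoid (log ((1 - δ) / δ)) = 1 - δ := by
  have hne : 1 - δ ≠ 0 := sub_ne_zero.2 hδ1.ne'
  rw [sigmoid_def, exp_neg, exp_log (div_pos (sub_pos.2 hδ1) hδ0), inv_div]
  field_simp
  ring

lemma exp_div_one_add_exp (a : ℝ) : exp a / (1 + exp a) = sigmoid a := by
  rw [sigmoid_def, exp_neg]
  field_simp
  ring

lemma one_sub_le_exp_div_one_add_exp_iff {δ : ℝ} (hδ0 : 0 < δ) (hδ1 : δ < 1) (a : ℝ) :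
    1 - δ ≤ exp a / (1 + exp a) ↔ log ((1 - δ) / δ) ≤ a := by
  calc 1 - δ ≤ exp a / (1 + exp a) ↔ sigmoid (log ((1 - δ) / δ)) ≤ sigmoid a := by
        rw [sigmoid_log_one_sub_div hδ0 hδ1, exp_div_one_add_exp]
    _ ↔ log ((1 - δ) / δ) ≤ a := sigmoid_le_iff

lemma emScore_self {τ : ℝ} (hτ : 0 < τ) (qDs : ℝ) : emScore τ qDs qDs = 1 := by
  have hinside : ¬(qDs ≤ qDs - 2 * τ ∨ qDs + 2 * τ ≤ qDs) := by
    push Not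
    constructor <;> linarith
  rw [emScore, if_neg hinside, if_pos le_rfl]
  field_simp
  ring

lemma emScore_eq_zero_of_notMem_Ioo {τ qDs x : ℝ}
    (hx : x ∉ Set.Ioo (qDs - 2 * τ) (qDs + 2 * τ)) : emScore τ qDs x = 0 := by
  rw [Set.mem_Ioo, not_and_or, not_lt, not_lt] at hx
  rw [emScore, if_pos hx]

lemma emProb_true_of_emScore_eq_one {ε τ qDs qD : ℝ} (h : emScore τ qDs qD = 1) :
    emProb ε τ qDs qD true = exp (ε * τ) / (1 + exp (ε * τ)) := by
  simp [emProb, h, add_comm]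

lemma emProb_false_of_emScore_eq_zero {ε τ qDs qD : ℝ} (h : emScore τ qDs qD = 0) :
    emProb ε τ qDs qD false = exp (ε * τ) / (1 + exp (ε * τ)) := by
  simp [emProb, h]

/-- Effectiveness of `EM_count`: `e^{ετ}/(1 + e^{ετ}) ≥ 1 − δ ↔ τ ≥ (1/ε)·ln((1−δ)/δ)`;
(i) if `qD = qDs` then `Pr[output = 1] = e^{ετ}/(1 + e^{ετ})`, which is `≥ 1 − δ`
whenever `τ ≥ (1/ε)·ln((1−δ)/δ)`;
(ii) if `qD ∉ (qDs − 2τ, qDs + 2τ)` then `Pr[output = 0] = e^{ετ}/(1 + e^{ετ})`,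
which is `≥ 1 − δ` whenever `τ ≥ (1/ε)·ln((1−δ)/δ)`.
Hence the effectiveness threshold of `EM_count` at `δ` is at most `(1/ε)·ln((1−δ)/δ)`. -/
theorem emcount_effectiveness (ε τ δ qD qDs : ℝ) (hε : 0 < ε) (hτ : 0 < τ)
    (hδ0 : 0 < δ) (hδ1 : δ < 1) :
    (Real.exp (ε * τ) / (1 + Real.exp (ε * τ)) ≥ 1 - δ ↔
      τ ≥ (1 / ε) * Real.log ((1 - δ) / δ)) ∧
    (qD = qDs →
      emProb ε τ qDs qD true = Real.exp (ε * τ) / (1 + Real.exp (ε * τ)) ∧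
      (τ ≥ (1 / ε) * Real.log ((1 - δ) / δ) → emProb ε τ qDs qD true ≥ 1 - δ)) ∧
    (qD ∉ Set.Ioo (qDs - 2 * τ) (qDs + 2 * τ) →
      emProb ε τ qDs qD false = Real.exp (ε * τ) / (1 + Real.exp (ε * τ)) ∧
      (τ ≥ (1 / ε) * Real.log ((1 - δ) / δ) → emProb ε τ qDs qD false ≥ 1 - δ)) := by
  have hiff : Real.exp (ε * τ) / (1 + Real.exp (ε * τ)) ≥ 1 - δ ↔
      τ ≥ (1 / ε) * Real.log ((1 - δ) / δ) := by
    rw [ge_iff_le, ge_iff_le, one_sub_le_exp_div_one_add_exp_iff hδ0 hδ1, one_div_mul_eq_div,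
      div_le_iff₀ hε, mul_comm]
  refine ⟨hiff, fun hq => ?_, fun hq => ?_⟩
  · subst hq
    have hprob := emProb_true_of_emScore_eq_one (ε := ε) (emScore_self hτ qD)
    exact ⟨hprob, fun hτδ => hprob ▸ hiff.2 hτδ⟩
  · have hprob := emProb_false_of_emScore_eq_zero (ε := ε) (emScore_eq_zero_of_notMem_Ioo hq)
    exact ⟨hprob, fun hτδ => hprob ▸ hiff.2 hτδ⟩
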